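/- arXiv:2312.02718 — 3 statements merged into one kernel-verified Lean document; each statement's English description precedes it below -/
import Mathlib

section
/- Let N ≥ 3 and let a, b satisfy (b₁) and (a₂) with a nonnegative. Then there exist constants δ₀ ∈ (0,1) and ν₀ > 0 such that for every open set Θ ⊆ ℝ^N, every λ ≥ 1, and every continuously differentiable u : ℝ^N → ℝ with ∫_Θ K(x)(|∇u(x)|² + (λ a(x) + b(x)) u(x)²) dx < ∞, one has δ₀ ∫_Θ K(x)(|∇u|² + (λ a + b) u²) dx ≤ ∫_Θ K(x)(|∇u|² + (λ a + b) u²) dx − ν₀ ∫_Θ K(x) u² dx. -/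
open MeasureTheory Real Filter Topology RealInnerProductSpace

noncomputable section

abbrev En (N : ℕ) := EuclideanSpace ℝ (Fin N)

/-- The weight `K(x) = exp(|x|²/4)`. -/
def Kw {N : ℕ} (x : En N) : ℝ := Real.exp (‖x‖ ^ 2 / 4)

/-- under (b₁), (a₂) and nonnegativity of `a`, there are `δ₀ ∈ (0,1)` and
`ν₀ > 0` such that for every open `Θ ⊆ ℝ^N`, every `λ ≥ 1` and every `C¹` function `u`
with finite weighted energy on `Θ`,
`δ₀ ∫_Θ K(|∇u|² + (λa+b)u²) ≤ ∫_Θ K(|∇u|² + (λa+b)u²) − ν₀ ∫_Θ K u²`. -/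
theorem coercivity_estimate {N : ℕ} (hN : 3 ≤ N) (a b : En N → ℝ)
    (ha_cont : Continuous a) (ha_nonneg : ∀ x, 0 ≤ a x)
    (hb_cont : Continuous b) (M₁ : ℝ) (hM₁ : 0 < M₁) (hb_bdd : ∀ x, |b x| ≤ M₁)
    (M₀ : ℝ) (hM₀ : 0 < M₀) (hab : ∀ x, M₀ ≤ a x + b x) :
    ∃ δ₀ ∈ Set.Ioo (0 : ℝ) 1, ∃ ν₀ > (0 : ℝ),
      ∀ Θ : Set (En N), IsOpen Θ → ∀ lam : ℝ, 1 ≤ lam →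
        ∀ u : En N → ℝ, ContDiff ℝ 1 u →
          Integrable (fun x => Kw x * (‖gradient u x‖ ^ 2 + (lam * a x + b x) * u x ^ 2))
            (volume.restrict Θ) →
          δ₀ * ∫ x in Θ, Kw x * (‖gradient u x‖ ^ 2 + (lam * a x + b x) * u x ^ 2)
            ≤ (∫ x in Θ, Kw x * (‖gradient u x‖ ^ 2 + (lam * a x + b x) * u x ^ 2))
              - ν₀ * ∫ x in Θ, Kw x * u x ^ 2 := by
  refine ⟨1/2, ⟨by norm_num, by norm_num⟩, M₀/2, by positivity, ?_⟩
  intro Θ hΘ lam hlam u hu hInt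
  set F : En N → ℝ := fun x => Kw x * (‖gradient u x‖ ^ 2 + (lam * a x + b x) * u x ^ 2)
    with hF
  set G : En N → ℝ := fun x => Kw x * u x ^ 2 with hG
  have hK : ∀ x : En N, 0 ≤ Kw x := fun x => (Real.exp_pos _).le
  have hpt : ∀ x, M₀ * G x ≤ F x := by
    intro x
    have hcoef : M₀ ≤ lam * a x + b x := by
      have : (lam - 1) * a x ≥ 0 := mul_nonneg (by linarith) (ha_nonneg x)
      have := hab x
      nlinarith
    have h1 : M₀ * u x ^ 2 ≤ (lam * a x + b x) * u x ^ 2 :=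
      mul_le_mul_of_nonneg_right hcoef (sq_nonneg _)
    have h2 : ‖gradient u x‖ ^ 2 ≥ 0 := sq_nonneg _
    simp only [hF, hG]
    nlinarith [hK x]
  have hGmeas : AEStronglyMeasurable G (volume.restrict Θ) := by
    have : Continuous G := by
      apply Continuous.mul
      · exact (Real.continuous_exp.comp ((continuous_norm.pow 2).div_const 4))
      · exact (hu.continuous).pow 2
    exact this.aestronglyMeasurable
  have hGnonneg : ∀ x, 0 ≤ G x := fun x => mul_nonneg (hK x) (sq_nonneg _)
  have hGint : Integrable G (volume.restrict Θ) := by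
    refine Integrable.mono' (hInt.const_mul (1 / M₀)) hGmeas ?_
    filter_upwards with x
    rw [Real.norm_of_nonneg (hGnonneg x)]
    have := hpt x
    rw [one_div, inv_mul_eq_div, le_div_iff₀ hM₀]
    nlinarith
  have hMGint : Integrable (fun x => M₀ * G x) (volume.restrict Θ) := hGint.const_mul M₀
  have hle : ∫ x in Θ, M₀ * G x ≤ ∫ x in Θ, F x :=
    integral_mono hMGint hInt hpt
  rw [MeasureTheory.integral_const_mul] at hle
  have : (0:ℝ) ≤ ∫ x in Θ, G x := integral_nonneg hGnonneg
  linarith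
end
end

section
/- Let N ≥ 3, 2* = 2N/(N−2), q ∈ (1, 2*−1), β > 0, ν₀ > 0, and let ρ > 0 satisfy β ρ^{q−1} + ρ^{2*−2} = ν₀. Define f : ℝ → ℝ by f(t) = 0 for t ≤ 0, f(t) = β t^q + t^{2*−1} for t ∈ [0, ρ], f(t) = ν₀ t for t ≥ ρ, and F(t) = ∫₀^t f(τ) dτ. Then for every t ∈ ℝ, F(t) − (1/(q+1)) f(t) t ≤ (1/2 − 1/(q+1)) ν₀ t². -/
open MeasureTheory Real Filter Topology intervalIntegral

noncomputable section

/-- The critical Sobolev exponent `2* = 2N/(N−2)`. -/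
def twoStar (N : ℕ) : ℝ := 2 * N / ((N : ℝ) - 2)

/-- for the truncated nonlinearity `f` (equal to `βt^q + t^{2*−1}` on `[0,ρ]`,
to `ν₀t` for `t ≥ ρ` and to `0` for `t ≤ 0`, where `βρ^{q−1} + ρ^{2*−2} = ν₀`) and its
primitive `F(t) = ∫₀^t f`, one has `F(t) − f(t)t/(q+1) ≤ (1/2 − 1/(q+1)) ν₀ t²` for all `t`. -/
theorem truncated_nonlinearity_estimate {N : ℕ} (hN : 3 ≤ N)
    (q β ν₀ ρ : ℝ) (hq1 : 1 < q) (hq2 : q < twoStar N - 1)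
    (hβ : 0 < β) (hν₀ : 0 < ν₀) (hρ : 0 < ρ)
    (hρeq : β * ρ ^ (q - 1) + ρ ^ (twoStar N - 2) = ν₀)
    (f F : ℝ → ℝ)
    (hf : ∀ t : ℝ,
      f t = if t ≤ 0 then 0
        else if t ≤ ρ then β * t ^ q + t ^ (twoStar N - 1)
        else ν₀ * t)
    (hF : ∀ t : ℝ, F t = ∫ τ in (0:ℝ)..t, f τ) :
    ∀ t : ℝ, F t - (1 / (q + 1)) * (f t * t) ≤ (1/2 - 1/(q+1)) * ν₀ * t ^ 2 := by
  set s : ℝ := twoStar N with hs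
  have hN3 : (3:ℝ) ≤ (N:ℝ) := by exact_mod_cast hN
  have hN2 : (0:ℝ) < (N:ℝ) - 2 := by linarith
  have hs2 : 2 < s := by
    rw [hs, twoStar, lt_div_iff₀ hN2]; linarith
  have hqs : q + 1 < s := by linarith
  have hq0 : (0:ℝ) ≤ q := by linarith
  have hq1' : q + 1 ≠ 0 := by linarith
  have hs0 : s ≠ 0 := by linarith
  have hsm1 : (0:ℝ) ≤ s - 1 := by linarith
  -- transfer of interval integrability
  have hcongr : ∀ (g : ℝ → ℝ) (a b : ℝ), IntervalIntegrable g volume a b →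
      Set.EqOn g f (Set.uIcc a b) → IntervalIntegrable f volume a b := by
    intro g a b hg heq
    rw [intervalIntegrable_iff] at hg ⊢
    exact hg.congr_fun (fun x hx => heq (Set.uIoc_subset_uIcc hx)) measurableSet_uIoc
  -- f agrees with the power formula on [0, u] for u ≤ ρ
  have heqpow : ∀ u : ℝ, 0 ≤ u → u ≤ ρ →
      Set.EqOn (fun τ : ℝ => β * τ ^ q + τ ^ (s - 1)) f (Set.uIcc 0 u) := by
    intro u hu0 huρ τ hτ
    rw [Set.uIcc_of_le hu0] at hτ
    obtain ⟨hτ0, hτu⟩ := hτ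
    rw [hf]
    rcases le_or_gt τ 0 with h0 | h0
    · have : τ = 0 := le_antisymm h0 hτ0
      subst this
      simp [Real.zero_rpow (by linarith : q ≠ 0),
        Real.zero_rpow (by linarith : s - 1 ≠ 0)]
    · rw [if_neg (not_le.2 h0), if_pos (le_trans hτu huρ)]
  have hipow : ∀ u : ℝ, IntervalIntegrable (fun τ : ℝ => β * τ ^ q + τ ^ (s - 1))
      volume 0 u := fun u =>
    ((intervalIntegrable_rpow (Or.inl hq0)).const_mul β).add
      (intervalIntegrable_rpow (Or.inl hsm1))
  -- value of F on [0, ρ]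
  have hFval : ∀ u : ℝ, 0 ≤ u → u ≤ ρ →
      F u = β / (q + 1) * u ^ (q + 1) + u ^ s / s := by
    intro u hu0 huρ
    rw [hF, ← intervalIntegral.integral_congr (heqpow u hu0 huρ)]
    rw [intervalIntegral.integral_add ((intervalIntegrable_rpow (Or.inl hq0)).const_mul β)
      (intervalIntegrable_rpow (Or.inl hsm1)), intervalIntegral.integral_const_mul,
      integral_rpow (Or.inl (by linarith : (-1:ℝ) < q)),
      integral_rpow (Or.inl (by linarith : (-1:ℝ) < s - 1))]
    rw [Real.zero_rpow (by linarith : q + 1 ≠ 0), sub_add_cancel,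
      Real.zero_rpow hs0]
    ring
  intro t
  rcases le_or_gt t 0 with ht | ht
  · -- t ≤ 0
    have hF0 : F t = 0 := by
      rw [hF]
      have : Set.EqOn f (fun _ : ℝ => (0:ℝ)) (Set.uIcc 0 t) := by
        intro τ hτ
        rw [Set.uIcc_of_ge ht] at hτ
        rw [hf, if_pos hτ.2]
      rw [intervalIntegral.integral_congr this]
      simp
    have hft : f t = 0 := by rw [hf, if_pos ht]
    rw [hF0, hft]
    have h1 : 0 < 1/2 - 1/(q+1) := by
      rw [sub_pos, div_lt_div_iff₀ (by linarith) (by norm_num)]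
      linarith
    nlinarith [sq_nonneg t, mul_pos h1 hν₀]
  · rcases le_or_gt t ρ with htρ | htρ
    · -- 0 < t ≤ ρ
      have hFt := hFval t ht.le htρ
      have hft : f t = β * t ^ q + t ^ (s - 1) := by
        rw [hf, if_neg (not_le.2 ht), if_pos htρ]
      have hps : t ^ (s - 1) * t = t ^ s := by
        rw [← Real.rpow_add_one (ne_of_gt ht) (s-1)]; ring_nf
      have hpq : t ^ q * t = t ^ (q + 1) := by
        rw [← Real.rpow_add_one (ne_of_gt ht) q]
      rw [hFt, hft]
      have hts : 0 ≤ t ^ s := Real.rpow_nonneg ht.le s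
      have htq : 0 ≤ t ^ (q+1) := Real.rpow_nonneg ht.le (q+1)
      have key : β / (q + 1) * t ^ (q + 1) + t ^ s / s -
          1 / (q + 1) * ((β * t ^ q + t ^ (s - 1)) * t) = t ^ s * (1/s - 1/(q+1)) := by
        have expand : (β * t ^ q + t ^ (s - 1)) * t = β * t ^ (q+1) + t ^ s := by
          rw [add_mul, mul_assoc, hpq, hps]
        rw [expand]
        field_simp
        ring
      rw [key]
      have h1 : 1/s - 1/(q+1) ≤ 0 := by
        rw [sub_nonpos, div_le_div_iff₀ (by linarith) (by linarith)]
        linarith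
      have h2 : 0 ≤ (1/2 - 1/(q+1)) * ν₀ * t ^ 2 := by
        have : 0 ≤ 1/2 - 1/(q+1) := by
          rw [sub_nonneg, div_le_div_iff₀ (by linarith) (by norm_num)]
          linarith
        positivity
      nlinarith [mul_nonpos_of_nonneg_of_nonpos hts h1]
    · -- ρ < t
      have hfρt : Set.EqOn (fun τ : ℝ => ν₀ * τ) f (Set.uIcc ρ t) := by
        intro τ hτ
        rw [Set.uIcc_of_le htρ.le] at hτ
        obtain ⟨hτρ, hτt⟩ := hτ
        rw [hf, if_neg (not_le.2 (lt_of_lt_of_le hρ hτρ))]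
        rcases le_or_gt τ ρ with h | h
        · have : τ = ρ := le_antisymm h hτρ
          subst this
          rw [if_pos le_rfl]
          have e1 : β * τ ^ q = β * τ ^ (q-1) * τ := by
            rw [mul_assoc, ← Real.rpow_add_one (ne_of_gt hρ)]; ring_nf
          have e2 : τ ^ (s-1) = τ ^ (s-2) * τ := by
            rw [← Real.rpow_add_one (ne_of_gt hρ)]; ring_nf
          have : ν₀ * τ = β * τ ^ q + τ ^ (s - 1) := by
            rw [e1, e2, ← hρeq]; ring
          exact this
        · rw [if_neg (not_le.2 h)]
      have hi1 : IntervalIntegrable f volume 0 ρ :=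
        hcongr _ 0 ρ (hipow ρ) (heqpow ρ hρ.le le_rfl)
      have hi2 : IntervalIntegrable f volume ρ t :=
        hcongr _ ρ t ((continuous_const.mul continuous_id).intervalIntegrable ρ t) hfρt
      have hsplit : F t = F ρ + ∫ τ in ρ..t, f τ := by
        rw [hF, hF, intervalIntegral.integral_add_adjacent_intervals hi1 hi2]
      have hint2 : (∫ τ in ρ..t, f τ) = ν₀ * (t^2 - ρ^2) / 2 := by
        rw [← intervalIntegral.integral_congr hfρt, intervalIntegral.integral_const_mul,
          integral_id]
        ring
      have hFρ := hFval ρ hρ.le le_rfl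
      have hft : f t = ν₀ * t := by
        rw [hf, if_neg (not_le.2 (lt_trans hρ htρ)), if_neg (not_le.2 htρ)]
      -- key estimate: F ρ ≤ ν₀ ρ² / 2
      have hνρ : ν₀ * ρ^2 = β * ρ ^ (q+1) + ρ ^ s := by
        have e1 : ρ ^ (q+1) = ρ ^ (q-1) * ρ^2 := by
          rw [← Real.rpow_two, ← Real.rpow_add hρ]; ring_nf
        have e2 : ρ ^ s = ρ ^ (s-2) * ρ^2 := by
          rw [← Real.rpow_two, ← Real.rpow_add hρ]; ring_nf
        rw [e1, e2, ← hρeq]; ring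
      have hρq : 0 ≤ ρ ^ (q+1) := Real.rpow_nonneg hρ.le _
      have hρs : 0 ≤ ρ ^ s := Real.rpow_nonneg hρ.le _
      have hFρle : F ρ ≤ ν₀ * ρ^2 / 2 := by
        rw [hFρ]
        have h1 : β / (q+1) * ρ ^ (q+1) ≤ β * ρ ^ (q+1) / 2 := by
          rw [div_mul_eq_mul_div, div_le_div_iff₀ (by linarith) (by norm_num)]
          nlinarith [mul_nonneg hβ.le hρq]
        have h2 : ρ ^ s / s ≤ ρ ^ s / 2 :=
          div_le_div_of_nonneg_left hρs (by norm_num) (by linarith)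
        linarith
      rw [hsplit, hint2, hft]
      have e3 : 1 / (q+1) * (ν₀ * t * t) = 1/(q+1) * (ν₀ * t^2) := by ring
      have e4 : (1/2 - 1/(q+1)) * ν₀ * t ^ 2
          = ν₀ * t^2 / 2 - 1/(q+1) * (ν₀ * t^2) := by ring
      rw [e3, e4]
      linarith [hFρle]
end
end

section
/- Let N ≥ 3, K(x) = exp(|x|²/4), and let c > 0 be a constant. Let v : ℝ^N → ℝ be a continuously differentiable function with ∫_{ℝ^N} K(x)(|∇v(x)|² + v(x)²) dx < ∞ which is a weak solution of −Δv − (1/2)(x·∇v) + c v = 0 on ℝ^N, that is, ∫_{ℝ^N} K(∇v·∇φ + c v φ) dx = 0 for every smooth compactly supported φ : ℝ^N → ℝ. Then v = 0 almost everywhere. -/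
open MeasureTheory Real Filter Topology RealInnerProductSpace

noncomputable section

/-!
Testing the equation against `θₖ v`, where `θₖ` is a cutoff equal to `1` on the ball of radius
`k + 1` with uniformly bounded gradient, gives
`∫ K (θₖ |∇v|² + v ∇θₖ·∇v + c θₖ v²) = 0`. The integrands are dominated by a multiple of
`K (|∇v|² + v²)` and `θₖ ≡ 1` near every point for large `k`, so dominated convergence yields
`∫ K (|∇v|² + c v²) = 0`, hence `v = 0` a.e. as `K > 0` and `c > 0`.
Since `θₖ v` is only `C¹`, the weak formulation is first extended from smooth to `C¹` compactly
supported test functions by mollification, again by dominated convergence.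
-/

open Metric Function ContinuousLinearMap
open scoped Convolution Pointwise Gradient

section Approximation

variable {E : Type*} [NormedAddCommGroup E] [NormedSpace ℝ E] [FiniteDimensional ℝ E]

variable (E) in
def unitBump : ContDiffBump (0 : E) := ⟨1, 2, one_pos, one_lt_two⟩

def cutoff (R : ℝ) (x : E) : ℝ := unitBump E (R⁻¹ • x)

lemma contDiff_cutoff (R : ℝ) {n : ℕ∞} : ContDiff ℝ n (cutoff (E := E) R) :=
  (unitBump E).contDiff.comp (contDiff_const_smul R⁻¹)

lemma hasCompactSupport_cutoff {R : ℝ} (hR : R ≠ 0) : HasCompactSupport (cutoff (E := E) R) :=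
  (unitBump E).hasCompactSupport.comp_homeomorph (Homeomorph.smulOfNeZero R⁻¹ (inv_ne_zero hR))

lemma cutoff_nonneg (R : ℝ) (x : E) : 0 ≤ cutoff R x := (unitBump E).nonneg

lemma cutoff_le_one (R : ℝ) (x : E) : cutoff R x ≤ 1 := (unitBump E).le_one

lemma cutoff_eq_one {R : ℝ} (hR : 0 < R) {x : E} (hx : ‖x‖ ≤ R) : cutoff R x = 1 := by
  refine (unitBump E).one_of_mem_closedBall ?_
  rw [mem_closedBall_zero_iff, norm_smul, norm_inv, Real.norm_of_nonneg hR.le]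
  exact inv_mul_le_one_of_le₀ hx hR.le

lemma eventually_cutoff_eventuallyEq_one (x : E) : ∀ᶠ R in atTop, cutoff R =ᶠ[𝓝 x] 1 := by
  filter_upwards [eventually_ge_atTop (‖x‖ + 1)] with R hR
  filter_upwards [ball_mem_nhds x one_pos] with y hy
  have hy : ‖y‖ < ‖x‖ + 1 := by
    rw [mem_ball, dist_eq_norm] at hy
    linarith [norm_le_norm_add_norm_sub' y x]
  exact cutoff_eq_one (by linarith [norm_nonneg x]) (by linarith)

lemma exists_norm_fderiv_cutoff_le :
    ∃ C, ∀ R : ℝ, 1 ≤ R → ∀ x : E, ‖fderiv ℝ (cutoff R) x‖ ≤ C := by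
  have hχ : ContDiff ℝ 1 (unitBump E) := (unitBump E).contDiff
  obtain ⟨C, hC⟩ := (hχ.continuous_fderiv one_ne_zero).bounded_above_of_compact_support
    ((unitBump E).hasCompactSupport.fderiv (𝕜 := ℝ))
  refine ⟨C, fun R hR x => ?_⟩
  have hR' : ‖R⁻¹‖ ≤ 1 := by
    rw [norm_inv, Real.norm_of_nonneg (by linarith)]
    exact inv_le_one_of_one_le₀ hR
  calc ‖fderiv ℝ (cutoff R) x‖ = ‖R⁻¹‖ * ‖fderiv ℝ (unitBump E) (R⁻¹ • x)‖ := by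
        rw [show cutoff R = fun y => unitBump E (R⁻¹ • y) from rfl, fderiv_comp_smul, norm_smul]
    _ ≤ 1 * C := by gcongr; exact hC _
    _ = C := one_mul C

def mollifierBump (n : ℕ) : ContDiffBump (0 : E) where
  rIn := ((n : ℝ) + 1)⁻¹ / 2
  rOut := ((n : ℝ) + 1)⁻¹
  rIn_pos := by positivity
  rIn_lt_rOut := half_lt_self (by positivity)

variable [MeasurableSpace E] [BorelSpace E] {μ : Measure E} [μ.IsAddHaarMeasure]
  {F : Type*} [NormedAddCommGroup F] [NormedSpace ℝ F]

variable (μ) in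
def mollify (n : ℕ) (f : E → F) : E → F := (mollifierBump n).normed μ ⋆[lsmul ℝ ℝ, μ] f

lemma contDiff_mollify {f : E → F} (hf : LocallyIntegrable f μ) (n : ℕ) {m : ℕ∞} :
    ContDiff ℝ m (mollify μ n f) :=
  (mollifierBump n).hasCompactSupport_normed.contDiff_convolution_left _
    (mollifierBump n).contDiff_normed hf

lemma support_mollify_subset (f : E → F) (n : ℕ) :
    support (mollify μ n f) ⊆ closedBall (0 : E) 1 + tsupport f := by
  refine (support_convolution_subset _).trans (Set.add_subset_add ?_ (subset_tsupport f))
  rw [(mollifierBump n).support_normed_eq]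
  exact ball_subset_closedBall.trans
    (closedBall_subset_closedBall (inv_le_one_of_one_le₀ (by simp)))

lemma HasCompactSupport.mollify {f : E → F} (hf : HasCompactSupport f) (n : ℕ) :
    HasCompactSupport (mollify μ n f) :=
  HasCompactSupport.convolution _ (mollifierBump n).hasCompactSupport_normed hf

lemma fderiv_mollify [CompleteSpace F] {f : E → F} (hf : ContDiff ℝ 1 f)
    (hfc : HasCompactSupport f) (n : ℕ) :
    fderiv ℝ (mollify μ n f) = mollify μ n (fderiv ℝ f) := by
  have precompR_lsmul : (lsmul ℝ ℝ : ℝ →L[ℝ] F →L[ℝ] F).precompR E = lsmul ℝ ℝ := by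
    ext; simp [precompR]
  ext1 x
  rw [mollify, (hfc.hasFDerivAt_convolution_right _
    (mollifierBump n).integrable_normed.locallyIntegrable hf x).fderiv, precompR_lsmul]
  rfl

lemma norm_mollify_le [CompleteSpace F] {f : E → F} (hf : AEStronglyMeasurable f μ) {M : ℝ}
    (hM : ∀ y, ‖f y‖ ≤ M) (n : ℕ) (x : E) : ‖mollify μ n f x‖ ≤ M := by
  simpa [mollify] using dist_convolution_le (z₀ := 0) ((norm_nonneg _).trans (hM 0))
    (mollifierBump n).support_normed_eq.subset (mollifierBump n).nonneg_normed
    (mollifierBump n).integral_normed hf (fun y _ => by simpa using hM y)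

lemma tendsto_mollify [CompleteSpace F] {f : E → F} (hf : Continuous f) (x : E) :
    Tendsto (fun n => mollify μ n f x) atTop (𝓝 (f x)) :=
  ContDiffBump.convolution_tendsto_right_of_continuous
    (tendsto_inv_atTop_zero.comp (tendsto_atTop_add_const_right _ 1 tendsto_natCast_atTop_atTop))
    hf x

variable (μ) in
/-- The weak form of `-div g + w = 0` tested against `φ`. For `g = K ∇v`, `w = c K v` this is the
equation of the theorem, as `div (K ∇v) = K (Δv + x·∇v / 2)`. -/
def weakForm (g : E → E) (w : E → ℝ) (φ : E → ℝ) : ℝ :=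
  ∫ x, fderiv ℝ φ x (g x) + w x * φ x ∂μ

variable {g : E → E} {w : E → ℝ} {φ : E → ℝ}

lemma tendsto_weakForm_mollify (hg : Continuous g) (hw : Continuous w) (hφ : ContDiff ℝ 1 φ)
    (hφc : HasCompactSupport φ) :
    Tendsto (fun n => weakForm μ g w (mollify μ n φ)) atTop (𝓝 (weakForm μ g w φ)) := by
  have hDφ : Continuous (fderiv ℝ φ) := hφ.continuous_fderiv one_ne_zero
  obtain ⟨M₀, hM₀⟩ := hφ.continuous.bounded_above_of_compact_support hφc
  obtain ⟨M₁, hM₁⟩ := hDφ.bounded_above_of_compact_support (hφc.fderiv (𝕜 := ℝ))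
  set K := closedBall (0 : E) 1 + tsupport φ
  have hK : IsCompact K := (isCompact_closedBall 0 1).add hφc
  have hφK (n : ℕ) (x : E) (hx : x ∉ K) : mollify μ n φ x = 0 :=
    notMem_support.mp fun h => hx (support_mollify_subset (μ := μ) φ n h)
  have hDφK (n : ℕ) (x : E) (hx : x ∉ K) : mollify μ n (fderiv ℝ φ) x = 0 :=
    notMem_support.mp fun h => hx (Set.add_subset_add_left (tsupport_fderiv_subset ℝ)
      (support_mollify_subset (μ := μ) (fderiv ℝ φ) n h))
  have hbound : Continuous fun x => M₁ * ‖g x‖ + M₀ * ‖w x‖ := by fun_prop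
  simp only [weakForm, fderiv_mollify hφ hφc]
  refine tendsto_integral_of_dominated_convergence (K.indicator fun x => M₁ * ‖g x‖ + M₀ * ‖w x‖)
    (fun n => ?_) ((hbound.continuousOn.integrableOn_compact hK).integrable_indicator
      hK.measurableSet) (fun n => Eventually.of_forall fun x => ?_)
      (Eventually.of_forall fun x => ?_)
  · have hφn := contDiff_mollify (μ := μ) hφ.continuous.locallyIntegrable n (m := 1)
    rw [← fderiv_mollify hφ hφc]
    exact (((hφn.continuous_fderiv one_ne_zero).clm_apply hg).add
      (hw.mul hφn.continuous)).aestronglyMeasurable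
  · by_cases hx : x ∈ K
    · rw [Set.indicator_of_mem hx]
      calc ‖mollify μ n (fderiv ℝ φ) x (g x) + w x * mollify μ n φ x‖
          ≤ ‖mollify μ n (fderiv ℝ φ) x‖ * ‖g x‖ + ‖w x‖ * ‖mollify μ n φ x‖ :=
            (norm_add_le _ _).trans (add_le_add (le_opNorm _ _) (norm_mul_le _ _))
        _ ≤ M₁ * ‖g x‖ + M₀ * ‖w x‖ := by
            rw [mul_comm M₀]
            gcongr
            exacts [norm_mollify_le hDφ.aestronglyMeasurable hM₁ n x,
              norm_mollify_le hφ.continuous.aestronglyMeasurable hM₀ n x]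
    · simp [Set.indicator_of_notMem hx, hφK n x hx, hDφK n x hx]
  · exact (((apply ℝ ℝ (g x)).continuous.tendsto _).comp (tendsto_mollify hDφ x)).add
      (tendsto_const_nhds.mul (tendsto_mollify hφ.continuous x))

lemma weakForm_eq_zero_of_contDiff_one (hg : Continuous g) (hw : Continuous w)
    (hweak : ∀ ψ : E → ℝ, ContDiff ℝ (⊤ : ℕ∞) ψ → HasCompactSupport ψ → weakForm μ g w ψ = 0)
    (hφ : ContDiff ℝ 1 φ) (hφc : HasCompactSupport φ) : weakForm μ g w φ = 0 := by
  refine tendsto_nhds_unique (tendsto_weakForm_mollify hg hw hφ hφc) ?_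
  simp only [hweak _ (contDiff_mollify hφ.continuous.locallyIntegrable _) (hφc.mollify _),
    tendsto_const_nhds]

end Approximation

lemma abs_cutoff_energy_le {θ d g v c C : ℝ} (hθ0 : 0 ≤ θ) (hθ1 : θ ≤ 1) (hC : 0 ≤ C)
    (hd : |d| ≤ C * g) :
    |θ * g ^ 2 + v * d + c * θ * v ^ 2| ≤ (1 + C + |c|) * (g ^ 2 + v ^ 2) := by
  have hvd : |v * d| ≤ C * (g ^ 2 + v ^ 2) := by
    rw [abs_mul]
    nlinarith [abs_nonneg v, sq_nonneg (|v| - g), sq_abs v,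
      mul_le_mul_of_nonneg_left hd (abs_nonneg v)]
  have hcθ : |c * θ * v ^ 2| ≤ |c| * v ^ 2 := by
    rw [abs_mul, abs_mul, abs_of_nonneg hθ0, abs_sq]
    exact mul_le_mul_of_nonneg_right (mul_le_of_le_one_right (abs_nonneg c) hθ1) (sq_nonneg v)
  have hθg : |θ * g ^ 2| ≤ g ^ 2 := by
    rw [abs_mul, abs_of_nonneg hθ0, abs_sq]
    exact mul_le_of_le_one_left (sq_nonneg g) hθ1
  calc |θ * g ^ 2 + v * d + c * θ * v ^ 2| ≤ |θ * g ^ 2| + |v * d| + |c * θ * v ^ 2| :=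
        abs_add_three _ _ _
    _ ≤ (1 + C + |c|) * (g ^ 2 + v ^ 2) := by
        nlinarith [sq_nonneg g, sq_nonneg v, abs_nonneg c]

section Energy

variable {E : Type*} [NormedAddCommGroup E] [InnerProductSpace ℝ E] [FiniteDimensional ℝ E]
  {a v : E → ℝ} {c : ℝ}

lemma ContDiff.continuous_gradient (hv : ContDiff ℝ 1 v) : Continuous (∇ v) :=
  (InnerProductSpace.toDual ℝ E).symm.continuous.comp (hv.continuous_fderiv one_ne_zero)

lemma fderiv_cutoff_mul_apply (hv : ContDiff ℝ 1 v) (R : ℝ) (x : E) :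
    fderiv ℝ (fun y => cutoff R y * v y) x (a x • ∇ v x) + a x * c * v x * (cutoff R x * v x) =
      a x * (cutoff R x * ‖∇ v x‖ ^ 2 + v x * fderiv ℝ (cutoff R) x (∇ v x)
        + c * cutoff R x * v x ^ 2) := by
  rw [fderiv_fun_mul ((contDiff_cutoff R (n := 1)).differentiable one_ne_zero x)
    (hv.differentiable one_ne_zero x)]
  simp only [add_apply, smul_apply, map_smul, ← inner_gradient_left,
    real_inner_self_eq_norm_sq, smul_eq_mul]
  ring

variable [MeasurableSpace E] [OpensMeasurableSpace E] {μ : Measure E}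

lemma integral_weighted_energy_eq_zero (ha : Continuous a) (ha0 : ∀ x, 0 ≤ a x)
    (hv : ContDiff ℝ 1 v) (hint : Integrable (fun x => a x * (‖∇ v x‖ ^ 2 + v x ^ 2)) μ)
    (hweak : ∀ φ : E → ℝ, ContDiff ℝ 1 φ → HasCompactSupport φ →
      weakForm μ (fun x => a x • ∇ v x) (fun x => a x * c * v x) φ = 0) :
    ∫ x, a x * (‖∇ v x‖ ^ 2 + c * v x ^ 2) ∂μ = 0 := by
  obtain ⟨C, hC⟩ := exists_norm_fderiv_cutoff_le (E := E)
  have hC0 : 0 ≤ C := (norm_nonneg _).trans (hC 1 le_rfl 0)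
  have hgrad := hv.continuous_gradient
  set G : ℕ → E → ℝ := fun k x => a x * (cutoff (k + 1) x * ‖∇ v x‖ ^ 2
    + v x * fderiv ℝ (cutoff (k + 1)) x (∇ v x) + c * cutoff (k + 1) x * v x ^ 2)
  have hG (k : ℕ) : ∫ x, G k x ∂μ = 0 := by
    rw [← hweak _ ((contDiff_cutoff _).mul hv)
      ((hasCompactSupport_cutoff (R := (k : ℝ) + 1) (by positivity)).mul_right)]
    exact integral_congr_ae (Eventually.of_forall fun x => (fderiv_cutoff_mul_apply hv _ x).symm)
  have hmeas (k : ℕ) : AEStronglyMeasurable (G k) μ := by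
    have hθ := contDiff_cutoff (E := E) (k + 1) (n := 1)
    have hDθ := hθ.continuous_fderiv one_ne_zero
    have := hθ.continuous
    have := hv.continuous
    exact Continuous.aestronglyMeasurable (by fun_prop)
  have hbound (k : ℕ) (x : E) :
      ‖G k x‖ ≤ (1 + C + |c|) * (a x * (‖∇ v x‖ ^ 2 + v x ^ 2)) := by
    rw [norm_mul, Real.norm_of_nonneg (ha0 x), Real.norm_eq_abs, mul_left_comm]
    exact mul_le_mul_of_nonneg_left (abs_cutoff_energy_le (cutoff_nonneg _ x)
      (cutoff_le_one _ x) hC0 ((le_opNorm _ _).trans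
        (mul_le_mul_of_nonneg_right (hC _ (by simp) x) (norm_nonneg _)))) (ha0 x)
  have hlim (x : E) :
      Tendsto (fun k => G k x) atTop (𝓝 (a x * (‖∇ v x‖ ^ 2 + c * v x ^ 2))) := by
    refine tendsto_const_nhds.congr' ?_
    filter_upwards [(tendsto_atTop_add_const_right _ 1 tendsto_natCast_atTop_atTop).eventually
      (eventually_cutoff_eventuallyEq_one x)] with k hk
    simp only [G, hk.eq_of_nhds, hk.fderiv_eq, Pi.one_apply, fderiv_one, Pi.zero_apply,
      zero_apply]
    ring
  refine tendsto_nhds_unique (tendsto_integral_of_dominated_convergence _ hmeas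
    (hint.const_mul _) (fun k => Eventually.of_forall (hbound k)) (Eventually.of_forall hlim)) ?_
  simp only [hG, tendsto_const_nhds]

theorem ae_eq_zero_of_weighted_weak_solution (ha : Continuous a) (ha0 : ∀ x, 0 < a x)
    (hc : 0 < c) (hv : ContDiff ℝ 1 v)
    (hint : Integrable (fun x => a x * (‖∇ v x‖ ^ 2 + v x ^ 2)) μ)
    (hweak : ∀ φ : E → ℝ, ContDiff ℝ 1 φ → HasCompactSupport φ →
      weakForm μ (fun x => a x • ∇ v x) (fun x => a x * c * v x) φ = 0) :
    v =ᵐ[μ] 0 := by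
  have hnonneg : 0 ≤ fun x => a x * (‖∇ v x‖ ^ 2 + c * v x ^ 2) := fun x => by
    have := ha0 x
    positivity
  have hinte : Integrable (fun x => a x * (‖∇ v x‖ ^ 2 + c * v x ^ 2)) μ := by
    have hgrad := hv.continuous_gradient
    have := hv.continuous
    refine (hint.const_mul (1 + c)).mono' (Continuous.aestronglyMeasurable (by fun_prop))
      (Eventually.of_forall fun x => ?_)
    rw [Real.norm_of_nonneg (hnonneg x)]
    nlinarith [sq_nonneg (v x), sq_nonneg ‖∇ v x‖, mul_pos (ha0 x) hc, ha0 x]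
  filter_upwards [(integral_eq_zero_iff_of_nonneg hnonneg hinte).mp
    (integral_weighted_energy_eq_zero ha (fun x => (ha0 x).le) hv hint hweak)] with x hx
  have : ‖∇ v x‖ ^ 2 + c * v x ^ 2 = 0 := (mul_eq_zero.mp hx).resolve_left (ha0 x).ne'
  exact pow_eq_zero_iff two_ne_zero |>.mp (by nlinarith [sq_nonneg ‖∇ v x‖, sq_nonneg (v x)])

end Energy

theorem liouville_general {N : ℕ} (c : ℝ) (hc : 0 < c)
    (v : En N → ℝ) (hv : ContDiff ℝ 1 v)
    (hv_int : Integrable (fun x => Kw x * (‖gradient v x‖ ^ 2 + v x ^ 2)))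
    (hweak : ∀ φ : En N → ℝ, ContDiff ℝ (⊤ : ℕ∞) φ → HasCompactSupport φ →
      (∫ x, Kw x * (⟪gradient v x, gradient φ x⟫ + c * v x * φ x)) = 0) :
    ∀ᵐ x : En N, v x = 0 := by
  have hK : Continuous (Kw (N := N)) := by unfold Kw; fun_prop
  refine ae_eq_zero_of_weighted_weak_solution hK (fun x => Real.exp_pos _) hc hv hv_int
    fun φ hφ hφc => weakForm_eq_zero_of_contDiff_one (hK.smul hv.continuous_gradient)
      ((hK.mul continuous_const).mul hv.continuous) (fun ψ hψ hψc => ?_) hφ hφc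
  rw [← hweak ψ hψ hψc]
  refine integral_congr_ae (Eventually.of_forall fun x => ?_)
  simp only [map_smul, inner_gradient_right, conj_trivial, smul_eq_mul]
  ring

/-- Liouville-type result: if `c > 0` and `v ∈ H_K^1(ℝ^N)` is a `C¹`
weak solution of `−Δv − (1/2)(x·∇v) + cv = 0` on `ℝ^N`, then `v = 0` a.e. -/
theorem liouville {N : ℕ} (hN : 3 ≤ N) (c : ℝ) (hc : 0 < c)
    (v : En N → ℝ) (hv : ContDiff ℝ 1 v)
    (hv_int : Integrable (fun x => Kw x * (‖gradient v x‖ ^ 2 + v x ^ 2)))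
    (hweak : ∀ φ : En N → ℝ, ContDiff ℝ (⊤ : ℕ∞) φ → HasCompactSupport φ →
      (∫ x, Kw x * (⟪gradient v x, gradient φ x⟫ + c * v x * φ x)) = 0) :
    ∀ᵐ x : En N, v x = 0 :=
  liouville_general c hc v hv hv_int hweak
end
end
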